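/- arXiv:2411.12892 — 4 statements merged into one kernel-verified Lean document; each statement's English description precedes it below -/
import Mathlib

section
/- Let n ≥ 2, γ > 0, and 0 < p < 1 with pn an integer and pn ≥ 1. Consider raw scores a ∈ ℝ^n where pn entries equal c + γ and the remaining entries equal c. For inverse temperature τ > 0, the maximum softmax probability is max_i softmax(τ a)_i = 1 / (pn + n(1−p)e^{−γτ}). For sparse attention that keeps the top κn entries (κ ∈ (p, 1], κn an integer) and renormalizes the unscaled softmax over those entries, the maximum probability is 1 / (pn + (κ−p)n e^{−γ}). Consequently the two maxima agree if and only if κ = p + (1−p)e^{−γ(τ−1)}. -/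
noncomputable def softmax {n : ℕ} (z : Fin n → ℝ) (i : Fin n) : ℝ :=
  Real.exp (z i) / ∑ j, Real.exp (z j)

lemma sum_ite_aux {n : ℕ} (S T : Finset (Fin n)) (hST : S ⊆ T) (A B : ℝ) :
    ∑ j ∈ T, (if j ∈ S then A else B)
      = (S.card : ℝ) * A + ((T.card : ℝ) - S.card) * B := by
  rw [← Finset.sum_sdiff hST]
  have h1 : ∑ j ∈ T \ S, (if j ∈ S then A else B) = ((T \ S).card : ℝ) * B := by
    rw [Finset.sum_congr rfl (fun j hj => if_neg (Finset.mem_sdiff.mp hj).2),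
      Finset.sum_const, nsmul_eq_mul]
  have h2 : ∑ j ∈ S, (if j ∈ S then A else B) = (S.card : ℝ) * A := by
    rw [Finset.sum_congr rfl (fun j hj => if_pos hj), Finset.sum_const, nsmul_eq_mul]
  rw [h1, h2, Finset.card_sdiff_of_subset hST]
  have hle := Finset.card_le_card hST
  push_cast [hle]
  ring

set_option maxHeartbeats 1000000 in
theorem stmt8 {n : ℕ} (hn : 2 ≤ n) (γ c : ℝ) (hγ : 0 < γ)
    (S T : Finset (Fin n)) (k m : ℕ)
    (hSk : S.card = k) (hk1 : 1 ≤ k) (hkn : k < n)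
    (hST : S ⊆ T) (hTm : T.card = m) (hkm : k < m) (hmn : m ≤ n)
    (a : Fin n → ℝ) (ha : ∀ i, a i = if i ∈ S then c + γ else c)
    (τ : ℝ) (hτ : 0 < τ)
    (p κ : ℝ) (hp : p = (k : ℝ) / (n : ℝ)) (hκ : κ = (m : ℝ) / (n : ℝ)) :
    (∀ i, softmax (fun j => τ * a j) i
        ≤ 1 / (p * n + n * (1 - p) * Real.exp (-γ * τ)))
    ∧ (∀ i ∈ S, softmax (fun j => τ * a j) i
        = 1 / (p * n + n * (1 - p) * Real.exp (-γ * τ)))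
    ∧ (∀ i ∈ S, Real.exp (a i) / ∑ j ∈ T, Real.exp (a j)
        = 1 / (p * n + (κ - p) * n * Real.exp (-γ)))
    ∧ (1 / (p * n + n * (1 - p) * Real.exp (-γ * τ))
          = 1 / (p * n + (κ - p) * n * Real.exp (-γ))
        ↔ κ = p + (1 - p) * Real.exp (-γ * (τ - 1))) := by
  have hn0 : (0:ℝ) < (n:ℝ) := by exact_mod_cast (Nat.lt_of_lt_of_le Nat.zero_lt_two hn)
  have hk0 : (0:ℝ) < (k:ℝ) := by exact_mod_cast hk1
  have hknR : (k:ℝ) ≤ (n:ℝ) := by exact_mod_cast hkn.le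
  have hkmR : (k:ℝ) ≤ (m:ℝ) := by exact_mod_cast hkm.le
  set X := Real.exp (-γ * τ) with hX
  set Y := Real.exp (-γ) with hY
  have hXpos : 0 < X := Real.exp_pos _
  have hYpos : 0 < Y := Real.exp_pos _
  have hpn : p * n = (k:ℝ) := by rw [hp]; field_simp
  have hqn : n * (1 - p) = (n:ℝ) - k := by rw [hp]; field_simp
  have hκn : (κ - p) * n = (m:ℝ) - k := by rw [hκ, hp]; field_simp
  -- denominators
  have hE : p * n + n * (1 - p) * X = (k:ℝ) + ((n:ℝ) - k) * X := by rw [hpn, hqn]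
  have hF : p * n + (κ - p) * n * Y = (k:ℝ) + ((m:ℝ) - k) * Y := by rw [hpn, hκn]
  have hEpos : 0 < (k:ℝ) + ((n:ℝ) - k) * X := by
    have : 0 ≤ ((n:ℝ) - k) * X := mul_nonneg (by linarith) hXpos.le
    linarith
  have hFpos : 0 < (k:ℝ) + ((m:ℝ) - k) * Y := by
    have : 0 ≤ ((m:ℝ) - k) * Y := mul_nonneg (by linarith) hYpos.le
    linarith
  -- exp identities
  have hexp1 : X * Real.exp (τ * (c + γ)) = Real.exp (τ * c) := by
    rw [hX, ← Real.exp_add]; ring_nf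
  have hexp2 : Y * Real.exp (c + γ) = Real.exp c := by
    rw [hY, ← Real.exp_add]; ring_nf
  have hYE : Y * Real.exp γ = 1 := by rw [hY, ← Real.exp_add]; simp
  -- sums
  have hsum : ∑ j, Real.exp (τ * a j)
      = ((k:ℝ) + ((n:ℝ) - k) * X) * Real.exp (τ * (c + γ)) := by
    have h1 : ∑ j, Real.exp (τ * a j)
        = ∑ j ∈ Finset.univ, (if j ∈ S then Real.exp (τ * (c + γ)) else Real.exp (τ * c)) := by
      refine Finset.sum_congr rfl fun j _ => ?_
      rw [ha j]; by_cases h : j ∈ S <;> simp [h]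
    rw [h1, sum_ite_aux S Finset.univ (Finset.subset_univ S), hSk,
      Finset.card_univ, Fintype.card_fin, ← hexp1]
    ring
  have hsumT : ∑ j ∈ T, Real.exp (a j)
      = ((k:ℝ) + ((m:ℝ) - k) * Y) * Real.exp (c + γ) := by
    have h1 : ∑ j ∈ T, Real.exp (a j)
        = ∑ j ∈ T, (if j ∈ S then Real.exp (c + γ) else Real.exp c) := by
      refine Finset.sum_congr rfl fun j _ => ?_
      rw [ha j]; by_cases h : j ∈ S <;> simp [h]
    rw [h1, sum_ite_aux S T hST, hSk, hTm, ← hexp2]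
    ring
  have keyval : Real.exp (τ * (c + γ)) / ∑ j, Real.exp (τ * a j)
      = 1 / ((k:ℝ) + ((n:ℝ) - k) * X) := by
    rw [hsum]
    rw [div_eq_div_iff (by positivity) hEpos.ne']
    ring
  refine ⟨?_, ?_, ?_, ?_⟩
  · intro i
    rw [hE]
    calc softmax (fun j => τ * a j) i
        ≤ Real.exp (τ * (c + γ)) / ∑ j, Real.exp (τ * a j) := by
          unfold softmax
          have hai : a i ≤ c + γ := by rw [ha i]; split <;> nlinarith
          have hnum : Real.exp (τ * a i) ≤ Real.exp (τ * (c + γ)) :=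
            Real.exp_le_exp.mpr (by nlinarith)
          have hden : (0:ℝ) < ∑ j, Real.exp (τ * a j) := by rw [hsum]; positivity
          gcongr
      _ = 1 / ((k:ℝ) + ((n:ℝ) - k) * X) := keyval
  · intro i hi
    rw [hE, ← keyval]
    show Real.exp (τ * a i) / ∑ j, Real.exp (τ * a j) = _
    rw [ha i, if_pos hi]
  · intro i hi
    rw [hF, ha i, if_pos hi, hsumT, div_eq_div_iff (by positivity) hFpos.ne']
    ring
  · rw [hE, hF, div_eq_div_iff hEpos.ne' hFpos.ne', one_mul, one_mul, hκ, hp]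
    have hexp3 : Real.exp (-γ * (τ - 1)) = X * Real.exp γ := by
      rw [hX, ← Real.exp_add]; ring_nf
    rw [hexp3]
    have hn' : (n:ℝ) ≠ 0 := hn0.ne'
    constructor
    · intro h
      have hmk : (m:ℝ) - k = ((n:ℝ) - k) * X * Real.exp γ := by
        linear_combination Real.exp γ * h - ((m:ℝ) - k) * hYE
      field_simp
      linear_combination hmk
    · intro h
      have h' : (m:ℝ) - k = ((n:ℝ) - k) * (X * Real.exp γ) := by
        field_simp at h
        linear_combination h
      linear_combination Y * h' + (((n:ℝ) - k) * X) * hYE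
end

section
/- Let s: (0,∞) → ℝ^n be s(τ)_i = e^{τ z_i}/∑_j e^{τ z_j} for a fixed z ∈ ℝ^n with not all entries equal. Then the Shannon entropy H(τ) = −∑_i s(τ)_i log s(τ)_i is strictly decreasing in τ on (0, ∞). -/
open Finset Real

section WeightedVariance

variable {ι : Type*} [Fintype ι] (w z : ι → ℝ)

lemma two_mul_sum_mul_sum_sub_sq_eq :
    2 * ((∑ k, w k) * (∑ k, w k * z k ^ 2) - (∑ k, w k * z k) ^ 2) =
      ∑ i, ∑ j, w i * w j * (z i - z j) ^ 2 := by
  have hexpand : ∀ i j, w i * w j * (z i - z j) ^ 2 =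
      w i * (w j * z j ^ 2) + w j * (w i * z i ^ 2) - 2 * (w i * z i) * (w j * z j) :=
    fun i j => by ring
  simp only [hexpand, sum_sub_distrib, sum_add_distrib, ← mul_sum, ← sum_mul]
  ring

variable {w z} in
lemma sum_mul_sum_sub_sq_pos (hw : ∀ k, 0 < w k) {i j : ι} (hij : z i ≠ z j) :
    0 < (∑ k, w k) * (∑ k, w k * z k ^ 2) - (∑ k, w k * z k) ^ 2 := by
  have hterm : ∀ a b, 0 ≤ w a * w b * (z a - z b) ^ 2 := fun a b => by
    have := hw a; have := hw b; positivity
  have hij' : 0 < w i * w j * (z i - z j) ^ 2 := by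
    have := hw i; have := hw j; have := sub_ne_zero_of_ne hij; positivity
  have hsum : 0 < ∑ a, ∑ b, w a * w b * (z a - z b) ^ 2 :=
    sum_pos' (fun a _ => sum_nonneg fun b _ => hterm a b)
      ⟨i, mem_univ _, sum_pos' (fun b _ => hterm i b) ⟨j, mem_univ _, hij'⟩⟩
  linarith [two_mul_sum_mul_sum_sub_sq_eq w z]

end WeightedVariance

section ExpMoment

variable {ι : Type*} [Fintype ι] (z : ι → ℝ)

noncomputable def expMoment (k : ℕ) (τ : ℝ) : ℝ := ∑ j, exp (τ * z j) * z j ^ k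

lemma hasDerivAt_expMoment (k : ℕ) (τ : ℝ) :
    HasDerivAt (expMoment z k) (expMoment z (k + 1) τ) τ := by
  refine HasDerivAt.fun_sum fun j _ => ?_
  exact ((hasDerivAt_mul_const (z j)).exp.mul_const (z j ^ k)).congr_deriv (by ring)

lemma expMoment_zero : expMoment z 0 = fun τ => ∑ j, exp (τ * z j) := by
  funext τ
  simp [expMoment]

lemma expMoment_zero_pos [Nonempty ι] (τ : ℝ) : 0 < expMoment z 0 τ := by
  rw [expMoment_zero]
  exact sum_pos (fun j _ => exp_pos _) univ_nonempty

variable {z} in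
lemma expMoment_variance_pos {i j : ι} (hij : z i ≠ z j) (τ : ℝ) :
    0 < expMoment z 0 τ * expMoment z 2 τ - expMoment z 1 τ ^ 2 := by
  simpa [expMoment] using sum_mul_sum_sub_sq_pos (fun k => exp_pos (τ * z k)) hij

lemma hasDerivAt_log_expMoment_sub [Nonempty ι] (τ : ℝ) :
    HasDerivAt (fun t => log (expMoment z 0 t) - t * expMoment z 1 t / expMoment z 0 t)
      (-τ * ((expMoment z 0 τ * expMoment z 2 τ - expMoment z 1 τ ^ 2) / expMoment z 0 τ ^ 2))
      τ := by
  have hZ := (expMoment_zero_pos z τ).ne'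
  have hlog := (hasDerivAt_expMoment z 0 τ).log hZ
  have hquot := ((hasDerivAt_id' τ).fun_mul (hasDerivAt_expMoment z 1 τ)).fun_div
    (hasDerivAt_expMoment z 0 τ) hZ
  refine (hlog.fun_sub hquot).congr_deriv ?_
  field_simp
  ring

end ExpMoment

lemma entropy_softmax_eq {n : ℕ} [Nonempty (Fin n)] (x : Fin n → ℝ) :
    -∑ i, softmax x i * log (softmax x i) =
      log (∑ j, exp (x j)) - (∑ i, exp (x i) * x i) / ∑ j, exp (x j) := by
  have hZ : 0 < ∑ j, exp (x j) := sum_pos (fun j _ => exp_pos _) univ_nonempty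
  have hlog : ∀ i, log (softmax x i) = x i - log (∑ j, exp (x j)) := fun i => by
    rw [softmax, log_div (exp_pos _).ne' hZ.ne', log_exp]
  have hsum : ∑ i, softmax x i = 1 := by
    simp only [softmax, ← sum_div, div_self hZ.ne']
  simp only [hlog, mul_sub, sum_sub_distrib, ← sum_mul, hsum]
  simp only [softmax, div_mul_eq_mul_div, ← sum_div]
  ring

lemma entropy_softmax_smul_eq {n : ℕ} [Nonempty (Fin n)] (z : Fin n → ℝ) (τ : ℝ) :
    -∑ i, softmax (fun j => τ * z j) i * log (softmax (fun j => τ * z j) i) =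
      log (expMoment z 0 τ) - τ * expMoment z 1 τ / expMoment z 0 τ := by
  rw [entropy_softmax_eq, expMoment_zero]
  simp only [expMoment, pow_one, mul_sum]
  congr 2
  exact sum_congr rfl fun j _ => by ring

theorem stmt10 {n : ℕ} (z : Fin n → ℝ) (hz : ∃ i j, z i ≠ z j) :
    StrictAntiOn
      (fun τ : ℝ =>
        -∑ i, softmax (fun j => τ * z j) i * Real.log (softmax (fun j => τ * z j) i))
      (Set.Ioi 0) := by
  obtain ⟨i, j, hij⟩ := hz
  have : Nonempty (Fin n) := ⟨i⟩
  simp only [entropy_softmax_smul_eq]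
  have hderiv := hasDerivAt_log_expMoment_sub z
  refine strictAntiOn_of_hasDerivWithinAt_neg (convex_Ioi 0)
    (fun τ _ => (hderiv τ).continuousAt.continuousWithinAt)
    (fun τ _ => (hderiv τ).hasDerivWithinAt) fun τ hτ => ?_
  rw [interior_Ioi] at hτ
  have hvar := div_pos (expMoment_variance_pos hij τ) (pow_pos (expMoment_zero_pos z τ) 2)
  linarith [mul_pos (Set.mem_Ioi.mp hτ) hvar]
end

section
/- Let P and Q be two probability vectors in ℝ^n obtained as row-wise softmax outputs: P = softmax(z) and Q = softmax(τ z) for some non-constant z ∈ ℝ^n and τ > 1. Then the ℓ₁/ℓ₂ sparsity score satisfies ‖Q‖₁/‖Q‖₂² ≤ ‖P‖₁/‖P‖₂², i.e., ‖Q‖₂ ≥ ‖P‖₂ (since both have ℓ₁ norm 1, it suffices to show ∑_i Q_i² ≥ ∑_i P_i²). -/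
lemma chebyshev_weighted {n : ℕ} (w x y : Fin n → ℝ) (hw : ∀ i, 0 ≤ w i)
    (hxy : ∀ i j, 0 ≤ (x i - x j) * (y i - y j)) :
    (∑ i, w i * x i) * (∑ i, w i * y i) ≤ (∑ i, w i) * (∑ i, w i * (x i * y i)) := by
  have key : 0 ≤ ∑ i, ∑ j, w i * w j * ((x i - x j) * (y i - y j)) :=
    Finset.sum_nonneg fun i _ => Finset.sum_nonneg fun j _ =>
      mul_nonneg (mul_nonneg (hw i) (hw j)) (hxy i j)
  have inner : ∀ i, ∑ j, w i * w j * ((x i - x j) * (y i - y j))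
      = (w i * (x i * y i)) * (∑ j, w j) + w i * (∑ j, w j * (x j * y j))
        - (w i * x i) * (∑ j, w j * y j) - (w i * y i) * (∑ j, w j * x j) := by
    intro i
    rw [Finset.mul_sum, Finset.mul_sum, Finset.mul_sum, Finset.mul_sum,
      ← Finset.sum_add_distrib, ← Finset.sum_sub_distrib, ← Finset.sum_sub_distrib]
    exact Finset.sum_congr rfl fun j _ => by ring
  have expand : ∑ i, ∑ j, w i * w j * ((x i - x j) * (y i - y j))
      = 2 * ((∑ i, w i) * (∑ i, w i * (x i * y i)))
        - 2 * ((∑ i, w i * x i) * (∑ i, w i * y i)) := by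
    rw [Finset.sum_congr rfl fun i _ => inner i]
    rw [Finset.sum_sub_distrib, Finset.sum_sub_distrib, Finset.sum_add_distrib,
      ← Finset.sum_mul, ← Finset.sum_mul, ← Finset.sum_mul, ← Finset.sum_mul]
    ring
  linarith [key, expand]

theorem stmt15 {n : ℕ} (z : Fin n → ℝ) (hz : ∃ i j, z i ≠ z j)
    (τ : ℝ) (hτ : 1 < τ) :
    (∑ i, (softmax z i) ^ 2 ≤ ∑ i, (softmax (fun j => τ * z j) i) ^ 2)
    ∧ (∑ i, |softmax (fun j => τ * z j) i|) / (∑ i, (softmax (fun j => τ * z j) i) ^ 2)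
        ≤ (∑ i, |softmax z i|) / (∑ i, (softmax z i) ^ 2) := by
  obtain ⟨i₀, -, -⟩ := hz
  haveI : Nonempty (Fin n) := ⟨i₀⟩
  set e : Fin n → ℝ := fun i => Real.exp (z i) with he
  have hepos : ∀ i, 0 < e i := fun i => Real.exp_pos _
  have hexp : ∀ i, Real.exp (τ * z i) = e i ^ τ := by
    intro i
    rw [he, Real.rpow_def_of_pos (Real.exp_pos _), Real.log_exp, mul_comm]
  have hA1 : 0 < ∑ i, e i := Finset.sum_pos (fun i _ => hepos i) Finset.univ_nonempty
  have hAτ : 0 < ∑ i, e i ^ τ :=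
    Finset.sum_pos (fun i _ => Real.rpow_pos_of_pos (hepos i) τ) Finset.univ_nonempty
  have hsm : ∀ i, softmax z i = e i / ∑ j, e j := fun i => rfl
  have hsmτ : ∀ i, softmax (fun j => τ * z j) i = e i ^ τ / ∑ j, e j ^ τ := by
    intro i
    simp only [softmax, hexp]
  -- main inequality on squares
  have main : ∑ i, (softmax z i) ^ 2 ≤ ∑ i, (softmax (fun j => τ * z j) i) ^ 2 := by
    simp only [hsm, hsmτ, div_pow, ← Finset.sum_div]
    rw [div_le_div_iff₀ (by positivity) (by positivity)]
    -- Cauchy-Schwarz : (∑ e^τ)^2 ≤ (∑ e) * (∑ e^(2τ-1))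
    have hCS : (∑ i, e i ^ τ) ^ 2 ≤ (∑ i, e i) * ∑ i, e i ^ (2 * τ - 1) := by
      have h1 : ∀ i, e i ^ τ = e i ^ ((1:ℝ)/2) * e i ^ (τ - 1/2) := by
        intro i
        rw [← Real.rpow_add (hepos i)]; norm_num
      have h2 : ∀ i, (e i ^ ((1:ℝ)/2)) ^ 2 = e i := by
        intro i
        rw [← Real.rpow_natCast (e i ^ ((1:ℝ)/2)) 2, ← Real.rpow_mul (hepos i).le]
        norm_num
      have h3 : ∀ i, (e i ^ (τ - 1/2)) ^ 2 = e i ^ (2 * τ - 1) := by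
        intro i
        rw [← Real.rpow_natCast (e i ^ (τ - 1/2)) 2, ← Real.rpow_mul (hepos i).le]
        norm_num; ring_nf
      calc (∑ i, e i ^ τ) ^ 2
          = (∑ i, e i ^ ((1:ℝ)/2) * e i ^ (τ - 1/2)) ^ 2 := by
            rw [Finset.sum_congr rfl fun i _ => h1 i]
        _ ≤ (∑ i, (e i ^ ((1:ℝ)/2)) ^ 2) * ∑ i, (e i ^ (τ - 1/2)) ^ 2 :=
            Finset.sum_mul_sq_le_sq_mul_sq _ _ _
        _ = (∑ i, e i) * ∑ i, e i ^ (2 * τ - 1) := by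
            rw [Finset.sum_congr rfl fun i _ => h2 i, Finset.sum_congr rfl fun i _ => h3 i]
    -- Chebyshev : (∑ e^2) * (∑ e^(2τ-1)) ≤ (∑ e) * (∑ (e^τ)^2)
    have hcheb : (∑ i, e i ^ 2) * (∑ i, e i ^ (2 * τ - 1)) ≤
        (∑ i, e i) * ∑ i, (e i ^ τ) ^ 2 := by
      have hc : (0:ℝ) ≤ 2 * τ - 2 := by linarith
      have := chebyshev_weighted e e (fun i => e i ^ (2 * τ - 2)) (fun i => (hepos i).le)
        (by
          intro i j
          rcases le_total (e i) (e j) with h | h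
          · have h2 := sub_nonpos.mpr (Real.rpow_le_rpow (hepos i).le h hc)
            nlinarith
          · exact mul_nonneg (by linarith)
              (sub_nonneg.mpr (Real.rpow_le_rpow (hepos j).le h hc)))
      have ha : ∀ i, e i * e i = e i ^ 2 := fun i => (sq (e i)).symm
      have hb : ∀ i, e i * e i ^ (2 * τ - 2) = e i ^ (2 * τ - 1) := by
        intro i
        nth_rewrite 1 [← Real.rpow_one (e i)]
        rw [← Real.rpow_add (hepos i)]; ring_nf
      have hd : ∀ i, e i * (e i * e i ^ (2 * τ - 2)) = (e i ^ τ) ^ 2 := by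
        intro i
        rw [hb i]
        nth_rewrite 1 [← Real.rpow_one (e i)]
        rw [← Real.rpow_add (hepos i), ← Real.rpow_natCast (e i ^ τ) 2,
          ← Real.rpow_mul (hepos i).le]
        norm_num; ring_nf
      calc (∑ i, e i ^ 2) * (∑ i, e i ^ (2 * τ - 1))
          = (∑ i, e i * e i) * (∑ i, e i * e i ^ (2 * τ - 2)) := by
            rw [Finset.sum_congr rfl fun i _ => ha i, Finset.sum_congr rfl fun i _ => hb i]
        _ ≤ (∑ i, e i) * ∑ i, e i * (e i * e i ^ (2 * τ - 2)) := this
        _ = (∑ i, e i) * ∑ i, (e i ^ τ) ^ 2 := by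
            rw [Finset.sum_congr rfl fun i _ => hd i]
    have hS2 : (0:ℝ) ≤ ∑ i, e i ^ 2 := Finset.sum_nonneg fun i _ => sq_nonneg _
    nlinarith [mul_le_mul_of_nonneg_left hCS hS2, mul_le_mul_of_nonneg_left hcheb hA1.le]
  refine ⟨main, ?_⟩
  have habs1 : ∑ i, |softmax z i| = 1 := by
    have : ∀ i, |softmax z i| = e i / ∑ j, e j := by
      intro i; rw [hsm i, abs_of_pos (div_pos (hepos i) hA1)]
    rw [Finset.sum_congr rfl fun i _ => this i, ← Finset.sum_div, div_self hA1.ne']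
  have habs2 : ∑ i, |softmax (fun j => τ * z j) i| = 1 := by
    have : ∀ i, |softmax (fun j => τ * z j) i| = e i ^ τ / ∑ j, e j ^ τ := by
      intro i
      rw [hsmτ i, abs_of_pos (div_pos (Real.rpow_pos_of_pos (hepos i) τ) hAτ)]
    rw [Finset.sum_congr rfl fun i _ => this i, ← Finset.sum_div, div_self hAτ.ne']
  have hP2 : 0 < ∑ i, (softmax z i) ^ 2 := by
    apply Finset.sum_pos (fun i _ => ?_) Finset.univ_nonempty
    rw [hsm i]; positivity
  rw [habs1, habs2]
  exact one_div_le_one_div_of_le hP2 main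
end

section
/- Fix non-constant z ∈ ℝ^n and τ₂ > τ₁ > 0. Then the distribution softmax(τ₂ z) majorizes softmax(τ₁ z); that is, after sorting each probability vector in decreasing order, all partial sums of softmax(τ₂ z) dominate those of softmax(τ₁ z). -/
open Finset

section TopSets

variable {ι : Type*} [DecidableEq ι]

theorem exists_card_eq_forall_notMem_le [Fintype ι] {α : Type*} [LinearOrder α] (f : ι → α) {k : ℕ}
    (hk : k ≤ Fintype.card ι) : ∃ B : Finset ι, #B = k ∧ ∀ i ∈ B, ∀ j ∉ B, f j ≤ f i := by
  induction k with
  | zero => exact ⟨∅, rfl, by simp⟩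
  | succ k ih =>
    obtain ⟨B, hBcard, hB⟩ := ih (by omega)
    have hBc : Bᶜ.Nonempty := by
      rw [← card_pos, card_compl]
      omega
    obtain ⟨m, hm, hmax⟩ := exists_max_image Bᶜ f hBc
    have hmB : m ∉ B := mem_compl.mp hm
    refine ⟨insert m B, by rw [card_insert_of_notMem hmB, hBcard], ?_⟩
    intro i hi j hj
    rw [mem_insert, not_or] at hj
    rcases mem_insert.mp hi with rfl | hi
    · exact hmax j (mem_compl.mpr hj.2)
    · exact hB i hi j hj.2

theorem sum_le_sum_of_card_eq_of_forall_notMem_le {M : Type*} [AddCommMonoid M] [LinearOrder M]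
    [IsOrderedAddMonoid M] (g : ι → M) {A B : Finset ι} (hcard : #A = #B)
    (hB : ∀ i ∈ B, ∀ j ∉ B, g j ≤ g i) : ∑ i ∈ A, g i ≤ ∑ i ∈ B, g i := by
  rcases B.eq_empty_or_nonempty with rfl | hBne
  · rw [card_empty, card_eq_zero] at hcard
    simp [hcard]
  set c := B.inf' hBne g
  calc ∑ i ∈ A, g i ≤ ∑ i ∈ A ∩ B, g i + #(A \ B) • c := by
        rw [← sum_inter_add_sum_sdiff A B]
        gcongr
        refine sum_le_card_nsmul _ _ _ fun j hj => ?_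
        exact le_inf' hBne _ fun i hi => hB i hi j (mem_sdiff.mp hj).2
    _ = ∑ i ∈ B ∩ A, g i + #(B \ A) • c := by rw [inter_comm, card_sdiff_comm hcard]
    _ ≤ ∑ i ∈ B, g i := by
        rw [← sum_inter_add_sum_sdiff B A]
        gcongr
        exact card_nsmul_le_sum _ _ _ fun i hi => inf'_le _ (mem_sdiff.mp hi).1

end TopSets

theorem softmax_le_softmax {n : ℕ} (v : Fin n → ℝ) {i j : Fin n} (h : v j ≤ v i) :
    softmax v j ≤ softmax v i := by
  unfold softmax
  gcongr

theorem div_add_le_div_add {a a' b b' : ℝ} (ha : 0 < a + a') (hb : 0 < b + b')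
    (h : a * b' ≤ b * a') : a / (a + a') ≤ b / (b + b') := by
  rw [div_le_div_iff₀ ha hb]
  linarith

theorem sum_softmax_mul_le_sum_softmax_mul {n : ℕ} (z : Fin n → ℝ) {B : Finset (Fin n)}
    (hB : ∀ i ∈ B, ∀ j ∉ B, z j ≤ z i) {s t : ℝ} (hst : s ≤ t) :
    ∑ i ∈ B, softmax (fun j => s * z j) i ≤ ∑ i ∈ B, softmax (fun j => t * z j) i := by
  rcases B.eq_empty_or_nonempty with rfl | ⟨i₀, -⟩
  · simp
  have hpos : ∀ τ : ℝ, 0 < ∑ j, Real.exp (τ * z j) := fun τ =>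
    sum_pos (fun j _ => Real.exp_pos _) ⟨i₀, mem_univ _⟩
  have hcross : (∑ i ∈ B, Real.exp (s * z i)) * ∑ j ∈ Bᶜ, Real.exp (t * z j) ≤
      (∑ i ∈ B, Real.exp (t * z i)) * ∑ j ∈ Bᶜ, Real.exp (s * z j) := by
    rw [sum_mul_sum, sum_mul_sum]
    refine sum_le_sum fun i hi => sum_le_sum fun j hj => ?_
    rw [← Real.exp_add, ← Real.exp_add, Real.exp_le_exp]
    nlinarith [hB i hi j (mem_compl.mp hj)]
  unfold softmax
  rw [← sum_div, ← sum_div, ← sum_add_sum_compl B fun j => Real.exp (s * z j),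
    ← sum_add_sum_compl B fun j => Real.exp (t * z j)]
  refine div_add_le_div_add ?_ ?_ hcross <;> rw [sum_add_sum_compl]
  exacts [hpos s, hpos t]

theorem stmt16_general {n : ℕ} (z : Fin n → ℝ)
    (τ₁ τ₂ : ℝ) (hτ₁ : 0 < τ₁) (hτ : τ₁ < τ₂) :
    ∀ A : Finset (Fin n), ∃ B : Finset (Fin n), B.card = A.card ∧
      ∑ i ∈ A, softmax (fun j => τ₁ * z j) i ≤ ∑ i ∈ B, softmax (fun j => τ₂ * z j) i := by
  intro A
  obtain ⟨B, hBcard, hB⟩ := exists_card_eq_forall_notMem_le z A.card_le_univ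
  refine ⟨B, hBcard, ?_⟩
  calc ∑ i ∈ A, softmax (fun j => τ₁ * z j) i ≤ ∑ i ∈ B, softmax (fun j => τ₁ * z j) i :=
        sum_le_sum_of_card_eq_of_forall_notMem_le _ hBcard.symm fun i hi j hj =>
          softmax_le_softmax _ (mul_le_mul_of_nonneg_left (hB i hi j hj) hτ₁.le)
    _ ≤ ∑ i ∈ B, softmax (fun j => τ₂ * z j) i :=
        sum_softmax_mul_le_sum_softmax_mul z hB hτ.le

/-- Majorization via the "sum of any k entries is dominated by the sum of some k
entries" formulation, equivalent to dominance of all partial sums of the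
decreasing rearrangements for probability vectors. -/
theorem stmt16 {n : ℕ} (z : Fin n → ℝ) (hz : ∃ i j, z i ≠ z j)
    (τ₁ τ₂ : ℝ) (hτ₁ : 0 < τ₁) (hτ : τ₁ < τ₂) :
    ∀ A : Finset (Fin n), ∃ B : Finset (Fin n), B.card = A.card ∧
      ∑ i ∈ A, softmax (fun j => τ₁ * z j) i ≤ ∑ i ∈ B, softmax (fun j => τ₂ * z j) i :=
  stmt16_general z τ₁ τ₂ hτ₁ hτ
end
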